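/- For r ∈ (0, 1/2) and ρ ∈ (0, 1], every solution α ∈ [0,1] of the BPA fixed-point equation satisfies α ≤ r, i.e. the limiting fraction of the total degree held by minority nodes is at most the minority population ratio. -/

import Mathlib

/-!
Write `D₁ = 1 - α(1-ρ)`, `D₂ = 1 - (1-α)(1-ρ)` and `S = (1-α)D₂ + αD₁`. After clearing
denominators the fixed-point equation yields two identities:
`(2α - 1)(2D₁D₂ - ρ) = (2r - 1)S` and `(α - r)S = (2α - 1)α(1-α)(1-ρ)ρ`.
Since `D₁ + D₂ = 1 + ρ` with both factors in `[ρ, 1]`, we have `D₁D₂ ≥ ρ`, and `S ≥ ρ > 0`.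
The first identity with `r < 1/2` forces `α < 1/2`, and then the second one gives `α ≤ r`.
-/

namespace BPA

variable {r ρ α : ℝ}

lemma le_one_sub_mul_one_sub {x : ℝ} (hx : x ≤ 1) (hρ1 : ρ ≤ 1) : ρ ≤ 1 - x * (1 - ρ) := by
  nlinarith [mul_nonneg (sub_nonneg.2 hx) (sub_nonneg.2 hρ1)]

lemma le_denom_mul_denom (hρ1 : ρ ≤ 1) (h0 : 0 ≤ α) (h1 : α ≤ 1) :
    ρ ≤ (1 - α * (1 - ρ)) * (1 - (1 - α) * (1 - ρ)) := by
  have hD₁ : ρ ≤ 1 - α * (1 - ρ) := le_one_sub_mul_one_sub h1 hρ1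
  have hD₁_le : 1 - α * (1 - ρ) ≤ 1 := by nlinarith [mul_nonneg h0 (sub_nonneg.2 hρ1)]
  nlinarith [mul_nonneg (sub_nonneg.2 hD₁) (sub_nonneg.2 hD₁_le)]

lemma le_weight (hρ1 : ρ ≤ 1) (h0 : 0 ≤ α) (h1 : α ≤ 1) :
    ρ ≤ (1 - α) * (1 - (1 - α) * (1 - ρ)) + α * (1 - α * (1 - ρ)) := by
  have hS : (1 - α) * (1 - (1 - α) * (1 - ρ)) + α * (1 - α * (1 - ρ)) - ρ
      = 2 * (α * (1 - α)) * (1 - ρ) := by ring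
  nlinarith [mul_nonneg (mul_nonneg h0 (sub_nonneg.2 h1)) (sub_nonneg.2 hρ1)]

lemma fixedPoint_cleared (hD₁ : 1 - α * (1 - ρ) ≠ 0) (hD₂ : 1 - (1 - α) * (1 - ρ) ≠ 0)
    (h : 2 * α = 1 - (1 - r) * (1 - α) / (1 - α * (1 - ρ))
      + r * α / (1 - (1 - α) * (1 - ρ))) :
    2 * α * ((1 - α * (1 - ρ)) * (1 - (1 - α) * (1 - ρ)))
      = (1 - α * (1 - ρ)) * (1 - (1 - α) * (1 - ρ))
        - (1 - r) * (1 - α) * (1 - (1 - α) * (1 - ρ)) + r * α * (1 - α * (1 - ρ)) := by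
  field_simp at h
  linear_combination h

section Cleared

variable (h : 2 * α * ((1 - α * (1 - ρ)) * (1 - (1 - α) * (1 - ρ)))
      = (1 - α * (1 - ρ)) * (1 - (1 - α) * (1 - ρ))
        - (1 - r) * (1 - α) * (1 - (1 - α) * (1 - ρ)) + r * α * (1 - α * (1 - ρ)))
include h

lemma two_mul_sub_one_mul_eq :
    (2 * α - 1) * (2 * ((1 - α * (1 - ρ)) * (1 - (1 - α) * (1 - ρ))) - ρ)
      = (2 * r - 1) * ((1 - α) * (1 - (1 - α) * (1 - ρ)) + α * (1 - α * (1 - ρ))) := by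
  linear_combination 2 * h

lemma sub_mul_weight_eq :
    (α - r) * ((1 - α) * (1 - (1 - α) * (1 - ρ)) + α * (1 - α * (1 - ρ)))
      = (2 * α - 1) * (α * (1 - α) * (1 - ρ) * ρ) := by
  linear_combination h

end Cleared

end BPA

open BPA in
theorem stmt_3_general (r ρ : ℝ) (hr1 : r < 1/2) (hρ : 0 < ρ) (hρ1 : ρ ≤ 1) :
    ∀ α ∈ Set.Icc (0:ℝ) 1,
      2 * α = 1 - (1 - r) * (1 - α) / (1 - α * (1 - ρ))
        + r * α / (1 - (1 - α) * (1 - ρ)) → α ≤ r := by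
  rintro α ⟨h0, h1⟩ heq
  have hcleared := fixedPoint_cleared (by linarith [le_one_sub_mul_one_sub h1 hρ1])
    (by linarith [le_one_sub_mul_one_sub (x := 1 - α) (by linarith) hρ1]) heq
  have hS : 0 < (1 - α) * (1 - (1 - α) * (1 - ρ)) + α * (1 - α * (1 - ρ)) :=
    hρ.trans_le (le_weight hρ1 h0 h1)
  have hα_half : 2 * α - 1 < 0 := by
    have hprod : 0 ≤ 2 * ((1 - α * (1 - ρ)) * (1 - (1 - α) * (1 - ρ))) - ρ := by
      linarith [le_denom_mul_denom hρ1 h0 h1]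
    refine neg_of_mul_neg_left ?_ hprod
    rw [two_mul_sub_one_mul_eq hcleared]
    exact mul_neg_of_neg_of_pos (by linarith) hS
  refine sub_nonpos.1 (nonpos_of_mul_nonpos_left ?_ hS)
  rw [sub_mul_weight_eq hcleared]
  exact mul_nonpos_of_nonpos_of_nonneg hα_half.le
    (mul_nonneg (mul_nonneg (mul_nonneg h0 (sub_nonneg.2 h1)) (sub_nonneg.2 hρ1)) hρ.le)

/-- For `r ∈ (0,1/2)` and `ρ ∈ (0,1]`, every solution `α ∈ [0,1]` of the BPA
fixed-point equation satisfies `α ≤ r`. -/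
theorem stmt_3 (r ρ : ℝ) (hr : 0 < r) (hr1 : r < 1/2) (hρ : 0 < ρ) (hρ1 : ρ ≤ 1) :
    ∀ α ∈ Set.Icc (0:ℝ) 1,
      2 * α = 1 - (1 - r) * (1 - α) / (1 - α * (1 - ρ))
        + r * α / (1 - (1 - α) * (1 - ρ)) → α ≤ r :=
  stmt_3_general r ρ hr1 hρ hρ1
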